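/- Let K be a finite field of odd order s and let x ∈ K³ be a vector with −Q(x) a nonsquare in K (an internal point of the conic C). The subgroup of the group of similitudes of Q modulo scalar matrices that fixes the projective point [x] (i.e. classes of similitudes A with A·x = λ·x for some λ ∈ K*) has order 2·(s + 1). -/

import Mathlib

/-!
In the basis `x, e₁, e₂` of `adaptedBasis x`, orthogonal for the polar form of `Q`, the form
becomes `q y₀² - m (y₁² + q y₂²)` with `q = Q(x)` and `m = x₀ x₁`, both nonzero for an internal
point. Every class of the stabiliser of `[x]` modulo scalars contains exactly one similitude fixing
the vector `x`, and it is an isometry. An isometry fixing `e₀` preserves the plane `⟨e₁, e₂⟩`, on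
which the form `y₁² + q y₂²` is anisotropic because `-q` is a nonsquare; its isometries are the
`s + 1` rotations by points of the conic `a² + q b² = 1` (parametrised by stereographic
projection) and the `s + 1` reflections.
-/

open Matrix

/-- The quadratic form `Q(x₀,x₁,x₂) = x₀x₁ - x₂²` on `K³`. -/
def quadForm (K : Type*) [CommRing K] (v : Fin 3 → K) : K := v 0 * v 1 - v 2 ^ 2

/-- The group of similitudes of `Q`, as a subgroup of `GL(3,K)`: those `A` with
`Q(A·x) = c·Q(x)` for all `x`, for some `c ∈ K*`. -/
def similitudeGroup (K : Type*) [Field K] : Subgroup (GL (Fin 3) K) where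
  carrier := {A | ∃ c : K, c ≠ 0 ∧
    ∀ x : Fin 3 → K, quadForm K ((A : Matrix (Fin 3) (Fin 3) K).mulVec x) = c * quadForm K x}
  mul_mem' := by
    rintro A B ⟨c, hc, hA⟩ ⟨d, hd, hB⟩
    refine ⟨c * d, mul_ne_zero hc hd, fun x => ?_⟩
    have h : ((A * B : GL (Fin 3) K) : Matrix (Fin 3) (Fin 3) K)
        = (A : Matrix (Fin 3) (Fin 3) K) * (B : Matrix (Fin 3) (Fin 3) K) := rfl
    rw [h, ← Matrix.mulVec_mulVec, hA, hB, mul_assoc]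
  one_mem' := ⟨1, one_ne_zero, fun x => by
    have h : ((1 : GL (Fin 3) K) : Matrix (Fin 3) (Fin 3) K) = 1 := rfl
    rw [h, Matrix.one_mulVec, one_mul]⟩
  inv_mem' := by
    rintro A ⟨c, hc, hA⟩
    refine ⟨c⁻¹, inv_ne_zero hc, fun x => ?_⟩
    have h : (A : Matrix (Fin 3) (Fin 3) K).mulVec
        (((A⁻¹ : GL (Fin 3) K) : Matrix (Fin 3) (Fin 3) K).mulVec x) = x := by
      rw [Matrix.mulVec_mulVec]
      have : (A : Matrix (Fin 3) (Fin 3) K) * ((A⁻¹ : GL (Fin 3) K) : Matrix (Fin 3) (Fin 3) K)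
          = 1 := A.mul_inv
      rw [this, Matrix.one_mulVec]
    have h2 := hA (((A⁻¹ : GL (Fin 3) K) : Matrix (Fin 3) (Fin 3) K).mulVec x)
    rw [h] at h2
    field_simp [h2]
    rw [h2, mul_comm]
  
/-- The subgroup of nonzero scalar matrices inside `GL(3,K)`. -/
def scalarSubgroup (K : Type*) [Field K] : Subgroup (GL (Fin 3) K) where
  carrier := {A | ∃ μ : K, μ ≠ 0 ∧ (A : Matrix (Fin 3) (Fin 3) K) = μ • (1 : Matrix (Fin 3) (Fin 3) K)}
  mul_mem' := by
    rintro A B ⟨μ, hμ, hA⟩ ⟨ν, hν, hB⟩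
    refine ⟨μ * ν, mul_ne_zero hμ hν, ?_⟩
    have h : ((A * B : GL (Fin 3) K) : Matrix (Fin 3) (Fin 3) K)
        = (A : Matrix (Fin 3) (Fin 3) K) * (B : Matrix (Fin 3) (Fin 3) K) := rfl
    rw [h, hA, hB, smul_mul_smul_comm, one_mul]
  one_mem' := ⟨1, one_ne_zero, by simp⟩
  inv_mem' := by
    rintro A ⟨μ, hμ, hA⟩
    refine ⟨μ⁻¹, inv_ne_zero hμ, ?_⟩
    have h : ((A⁻¹ : GL (Fin 3) K) : Matrix (Fin 3) (Fin 3) K)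
        = (A : Matrix (Fin 3) (Fin 3) K)⁻¹ := (Matrix.coe_units_inv A)
    rw [h, hA]
    exact Matrix.inv_eq_left_inv
      (by rw [smul_mul_smul_comm, one_mul, inv_mul_cancel₀ hμ, one_smul])
  

/-- The subgroup of `GL(3,K)` fixing the projective point `[x]`, i.e. those `A` with
`A·x = λ·x` for some `λ ∈ K*`. -/
def pointStabilizer (K : Type*) [Field K] (x : Fin 3 → K) : Subgroup (GL (Fin 3) K) where
  carrier := {A | ∃ lam : K, lam ≠ 0 ∧ (A : Matrix (Fin 3) (Fin 3) K).mulVec x = lam • x}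
  mul_mem' := by
    rintro A B ⟨a, ha, hA⟩ ⟨b, hb, hB⟩
    refine ⟨a * b, mul_ne_zero ha hb, ?_⟩
    have h : ((A * B : GL (Fin 3) K) : Matrix (Fin 3) (Fin 3) K)
        = (A : Matrix (Fin 3) (Fin 3) K) * (B : Matrix (Fin 3) (Fin 3) K) := rfl
    rw [h, ← Matrix.mulVec_mulVec, hB, Matrix.mulVec_smul, hA, smul_smul, mul_comm]
  one_mem' := ⟨1, one_ne_zero, by simp [Matrix.one_mulVec]⟩
  inv_mem' := by
    rintro A ⟨a, ha, hA⟩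
    refine ⟨a⁻¹, inv_ne_zero ha, ?_⟩
    have h : ((A⁻¹ : GL (Fin 3) K) : Matrix (Fin 3) (Fin 3) K).mulVec
        ((A : Matrix (Fin 3) (Fin 3) K).mulVec x) = x := by
      rw [Matrix.mulVec_mulVec]
      have h1 : ((A⁻¹ : GL (Fin 3) K) : Matrix (Fin 3) (Fin 3) K)
          * (A : Matrix (Fin 3) (Fin 3) K) = 1 := A.inv_mul
      rw [h1, Matrix.one_mulVec]
    rw [hA, Matrix.mulVec_smul] at h
    exact (eq_inv_smul_iff₀ ha).2 h

/-- The subgroup of `GL(3,K)` consisting of the similitudes of `Q` fixing the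
projective point `[x]`. -/
def similitudePointStabilizer (K : Type*) [Field K] (x : Fin 3 → K) :
    Subgroup (GL (Fin 3) K) :=
  pointStabilizer K x ⊓ similitudeGroup K

section

variable {K : Type*} [Field K]

lemma two_ne_zero_of_odd_card [Fintype K] (hodd : Odd (Fintype.card K)) : (2 : K) ≠ 0 :=
  Ring.two_ne_zero fun h => by
    have := FiniteField.even_card_iff_char_two.mp h
    rw [Nat.odd_iff] at hodd
    omega

lemma ne_zero_of_not_isSquare_neg {q : K} (hq : ¬IsSquare (-q)) : q ≠ 0 :=
  fun h => hq ⟨0, by simp [h]⟩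

lemma one_add_mul_sq_ne_zero {q : K} (hq : ¬IsSquare (-q)) (t : K) : 1 + q * t ^ 2 ≠ 0 := by
  intro h
  rcases eq_or_ne t 0 with rfl | ht
  · simp at h
  · exact hq ⟨t⁻¹, by field_simp; linear_combination -h⟩

def unitConic (q : K) : Set (K × K) := {c | c.1 ^ 2 + q * c.2 ^ 2 = 1}

open Classical in
/-- Stereographic projection from the point `(-1, 0)`: the line of slope `t` through it meets
the conic again at the image of `some t`. -/
noncomputable def optionEquivUnitConic {q : K} (h2 : (2 : K) ≠ 0) (hq : ¬IsSquare (-q)) :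
    Option K ≃ unitConic q where
  toFun o := o.elim ⟨(-1, 0), by simp [unitConic]⟩ fun t =>
    ⟨((1 - q * t ^ 2) / (1 + q * t ^ 2), 2 * t / (1 + q * t ^ 2)), by
      have := one_add_mul_sq_ne_zero hq t
      simp only [unitConic, Set.mem_ofPred_eq]
      field_simp
      ring⟩
  invFun c := if c.1.1 = -1 then none else some (c.1.2 / (1 + c.1.1))
  left_inv := by
    rintro (_ | t)
    · simp
    · have h := one_add_mul_sq_ne_zero hq t
      have hne : (1 - q * t ^ 2) / (1 + q * t ^ 2) ≠ -1 := by
        rw [Ne, div_eq_iff h]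
        exact fun h' => h2 (by linear_combination h')
      have hD : 1 + (1 - q * t ^ 2) / (1 + q * t ^ 2) = 2 / (1 + q * t ^ 2) := by
        field_simp; ring
      simp only [Option.elim, hne, if_false, Option.some.injEq, hD]
      field_simp
      exact mul_div_cancel_right₀ t (by rwa [mul_comm (t ^ 2)])
  right_inv := by
    rintro ⟨⟨a, b⟩, hab⟩
    simp only [unitConic, Set.mem_ofPred_eq] at hab
    rcases eq_or_ne a (-1) with rfl | ha
    · have hb : b = 0 := by
        have : q * b ^ 2 = 0 := by linear_combination hab
        simpa [ne_zero_of_not_isSquare_neg hq] using this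
      simp [hb]
    · have h1a : 1 + a ≠ 0 := fun h => ha (by linear_combination h)
      have key : 1 + q * (b / (1 + a)) ^ 2 = 2 / (1 + a) := by
        field_simp
        linear_combination hab
      simp only [ha, if_false, Option.elim, key]
      ext
      · field_simp
        linear_combination -hab
      · field_simp

lemma card_unitConic [Fintype K] {q : K} (h2 : (2 : K) ≠ 0) (hq : ¬IsSquare (-q)) :
    Nat.card (unitConic q) = Fintype.card K + 1 := by
  rw [← Nat.card_congr (optionEquivUnitConic h2 hq), Nat.card_eq_fintype_card, Fintype.card_option]

section Isometries

variable {n : Type*} [Fintype n] [DecidableEq n]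

def fixingIsometries (φ : (n → K) → K) (v : n → K) : Set (Matrix n n K) :=
  {M | M *ᵥ v = v ∧ ∀ y, φ (M *ᵥ y) = φ y}

lemma conj_mem_fixingIsometries_iff {φ : (n → K) → K} {v w : n → K} (P : GL n K)
    (hP : (P : Matrix n n K) *ᵥ w = v) (A : GL n K) :
    ((P⁻¹ * A * P : GL n K) : Matrix n n K) ∈
        fixingIsometries (fun y => φ ((P : Matrix n n K) *ᵥ y)) w ↔
      (A : Matrix n n K) ∈ fixingIsometries φ v := by
  have hPP (y : n → K) : (P : Matrix n n K) *ᵥ ((P⁻¹ : GL n K) : Matrix n n K) *ᵥ y = y := by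
    rw [mulVec_mulVec, ← Units.val_mul, mul_inv_cancel, Units.val_one, one_mulVec]
  have hPP' (y : n → K) : ((P⁻¹ : GL n K) : Matrix n n K) *ᵥ (P : Matrix n n K) *ᵥ y = y := by
    rw [mulVec_mulVec, ← Units.val_mul, inv_mul_cancel, Units.val_one, one_mulVec]
  simp only [fixingIsometries, Set.mem_ofPred_eq, Units.val_mul, ← mulVec_mulVec, hPP, hP]
  refine and_congr ⟨fun h => ?_, fun h => by rw [h, ← hP, hPP']⟩
    ⟨fun h y => by simpa [hPP] using h (((P⁻¹ : GL n K) : Matrix n n K) *ᵥ y), fun h y => h _⟩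
  rw [← hPP (A *ᵥ v), h, hP]

lemma card_fixingIsometries_conj {φ : (n → K) → K} {v w : n → K} (P : GL n K)
    (hP : (P : Matrix n n K) *ᵥ w = v) :
    Nat.card {A : GL n K // (A : Matrix n n K) ∈ fixingIsometries φ v} =
      Nat.card {A : GL n K //
        (A : Matrix n n K) ∈ fixingIsometries (fun y => φ ((P : Matrix n n K) *ᵥ y)) w} :=
  Nat.card_congr <| (MulAut.conj P⁻¹).toEquiv.subtypeEquiv fun A => by
    simpa using (conj_mem_fixingIsometries_iff P hP A).symm

end Isometries

lemma mul_ne_zero_of_not_isSquare_neg_quadForm {x : Fin 3 → K}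
    (hx : ¬IsSquare (-quadForm K x)) : x 0 * x 1 ≠ 0 :=
  fun h => hx ⟨x 2, by simp only [quadForm, h]; ring⟩

def diagForm (q m : K) (y : Fin 3 → K) : K := q * y 0 ^ 2 - m * (y 1 ^ 2 + q * y 2 ^ 2)

/-- The columns are `x` and two vectors spanning its orthogonal complement for the polar form
of `Q`, orthogonal to each other. -/
def adaptedBasis (x : Fin 3 → K) : Matrix (Fin 3) (Fin 3) K :=
  !![x 0, x 0, x 0 * x 2;
     x 1, -x 1, x 1 * x 2;
     x 2, 0, x 0 * x 1]

lemma adaptedBasis_mulVec_single (x : Fin 3 → K) : adaptedBasis x *ᵥ Pi.single 0 1 = x := by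
  ext i; fin_cases i <;> simp [adaptedBasis]

lemma quadForm_adaptedBasis_mulVec (x y : Fin 3 → K) :
    quadForm K (adaptedBasis x *ᵥ y) = diagForm (quadForm K x) (x 0 * x 1) y := by
  simp [quadForm, diagForm, adaptedBasis, mulVec, dotProduct, Fin.sum_univ_three]
  ring

lemma det_adaptedBasis (x : Fin 3 → K) :
    (adaptedBasis x).det = -(2 * (x 0 * x 1) * quadForm K x) := by
  simp [adaptedBasis, det_fin_three, quadForm]
  ring

lemma binaryForm_orthogonal_cases {q a b e f : K} (hq : q ≠ 0) (hab : a ^ 2 + q * b ^ 2 = 1)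
    (hef : e ^ 2 + q * f ^ 2 = q) (horth : a * e + q * b * f = 0) :
    (e = -(q * b) ∧ f = a) ∨ (e = q * b ∧ f = -a) := by
  -- `(a² + q b²)(e² + q f²) = (a e + q b f)² + q (a f - b e)²`
  have hdet : (a * f - b * e) ^ 2 = 1 :=
    mul_left_cancel₀ hq <| by
      linear_combination (e ^ 2 + q * f ^ 2) * hab + hef - (a * e + q * b * f) * horth
  have he : e = -(q * b) * (a * f - b * e) := by linear_combination a * horth - e * hab
  have hf : f = a * (a * f - b * e) := by linear_combination b * horth - f * hab
  rcases sq_eq_one_iff.mp hdet with h | h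
  · left; rw [h, mul_one] at he hf; exact ⟨he, hf⟩
  · right; rw [h] at he hf; exact ⟨by linear_combination he, by linear_combination hf⟩

def planeRotation (q : K) (c : K × K) : Matrix (Fin 3) (Fin 3) K :=
  !![1, 0, 0;
     0, c.1, -(q * c.2);
     0, c.2, c.1]

def planeReflection : Matrix (Fin 3) (Fin 3) K :=
  !![1, 0, 0;
     0, 1, 0;
     0, 0, -1]

def rotationOrReflection (q : K) : unitConic q ⊕ unitConic q → Matrix (Fin 3) (Fin 3) K
  | .inl c => planeRotation q c
  | .inr c => planeRotation q c * planeReflection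

lemma det_planeRotation {q : K} {c : K × K} (hc : c ∈ unitConic q) :
    (planeRotation q c).det = 1 := by
  simp only [unitConic, Set.mem_ofPred_eq] at hc
  simp [planeRotation, det_fin_three]
  linear_combination hc

lemma det_planeReflection : (planeReflection : Matrix (Fin 3) (Fin 3) K).det = -1 := by
  simp [planeReflection, det_fin_three]

lemma rotationOrReflection_injective {q : K} (h2 : (2 : K) ≠ 0) :
    Function.Injective (rotationOrReflection q) := by
  have hsign (c c' : unitConic q) : planeRotation q c ≠ planeRotation q c' * planeReflection := by
    intro h
    have := congrArg det h
    rw [det_mul, det_planeRotation c.2, det_planeRotation c'.2, det_planeReflection] at this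
    exact h2 (by linear_combination this)
  rintro (c | c) (c' | c') h
  · congr 1
    exact Subtype.ext (Prod.ext
      (by simpa [rotationOrReflection, planeRotation] using congr_fun₂ h 1 1)
      (by simpa [rotationOrReflection, planeRotation] using congr_fun₂ h 2 1))
  · exact absurd h (hsign c c')
  · exact absurd h.symm (hsign c' c)
  · congr 1
    exact Subtype.ext (Prod.ext
      (by simpa [rotationOrReflection, planeRotation, planeReflection] using congr_fun₂ h 1 1)
      (by simpa [rotationOrReflection, planeRotation, planeReflection] using congr_fun₂ h 2 1))

lemma rotationOrReflection_mem_fixingIsometries (q m : K) (s : unitConic q ⊕ unitConic q) :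
    rotationOrReflection q s ∈ fixingIsometries (diagForm q m) (Pi.single 0 1) := by
  obtain ⟨⟨a, b⟩, hab⟩ | ⟨⟨a, b⟩, hab⟩ := s <;>
  · simp only [unitConic, Set.mem_ofPred_eq] at hab
    refine ⟨?_, fun y => ?_⟩
    · ext i; fin_cases i <;> simp [rotationOrReflection, planeRotation, planeReflection]
    · simp [rotationOrReflection, planeRotation, planeReflection, diagForm, mulVec, dotProduct,
        Fin.sum_univ_three, -mul_eq_mul_left_iff]
      linear_combination m * (y 1 ^ 2 + q * y 2 ^ 2) * hab

lemma exists_rotationOrReflection_eq {q m : K} (hq : q ≠ 0) (hm : m ≠ 0) (h2 : (2 : K) ≠ 0)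
    {M : Matrix (Fin 3) (Fin 3) K} (hM : M ∈ fixingIsometries (diagForm q m) (Pi.single 0 1)) :
    ∃ s, rotationOrReflection q s = M := by
  obtain ⟨hM0, hMF⟩ := hM
  have hcol (i : Fin 3) : M i 0 = (Pi.single 0 1 : Fin 3 → K) i := by
    rw [← hM0, mulVec_single_one, col_apply]
  have h00 : M 0 0 = 1 := by simpa using hcol 0
  have h10 : M 1 0 = 0 := by simpa using hcol 1
  have h20 : M 2 0 = 0 := by simpa using hcol 2
  have hF (y₀ y₁ y₂ : K) := hMF ![y₀, y₁, y₂]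
  simp only [diagForm, mulVec, dotProduct, Fin.sum_univ_three, h00, h10, h20, cons_val_zero,
    cons_val_one, cons_val_two, head_cons, tail_cons] at hF
  have E1 := hF 0 1 0
  have E2 := hF 0 0 1
  have E01 := hF 1 1 0
  have E02 := hF 1 0 1
  have E12 := hF 0 1 1
  have hu : M 0 1 = 0 := by
    have : (2 * q) * M 0 1 = 0 := by linear_combination E01 - E1
    exact (mul_eq_zero.mp this).resolve_left (mul_ne_zero h2 hq)
  have hw : M 0 2 = 0 := by
    have : (2 * q) * M 0 2 = 0 := by linear_combination E02 - E2
    exact (mul_eq_zero.mp this).resolve_left (mul_ne_zero h2 hq)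
  rw [hu, hw] at E1 E2 E12
  have hab : M 1 1 ^ 2 + q * M 2 1 ^ 2 = 1 := mul_left_cancel₀ hm (by linear_combination -E1)
  have hef : M 1 2 ^ 2 + q * M 2 2 ^ 2 = q := mul_left_cancel₀ hm (by linear_combination -E2)
  have horth : M 1 1 * M 1 2 + q * M 2 1 * M 2 2 = 0 := by
    have : (2 * m) * (M 1 1 * M 1 2 + q * M 2 1 * M 2 2) = 0 := by
      linear_combination E1 + E2 - E12
    exact (mul_eq_zero.mp this).resolve_left (mul_ne_zero h2 hm)
  rcases binaryForm_orthogonal_cases hq hab hef horth with ⟨he, hf⟩ | ⟨he, hf⟩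
  · refine ⟨.inl ⟨(M 1 1, M 2 1), hab⟩, ?_⟩
    ext i j
    fin_cases i <;> fin_cases j <;>
      simp [rotationOrReflection, planeRotation, h00, h10, h20, hu, hw, he, hf]
  · refine ⟨.inr ⟨(M 1 1, M 2 1), hab⟩, ?_⟩
    ext i j
    fin_cases i <;> fin_cases j <;>
      simp [rotationOrReflection, planeRotation, planeReflection, h00, h10, h20, hu, hw, he, hf]

lemma card_fixingIsometries_diagForm [Fintype K] {q m : K} (hq : ¬IsSquare (-q)) (hm : m ≠ 0)
    (h2 : (2 : K) ≠ 0) :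
    Nat.card {A : GL (Fin 3) K //
      (A : Matrix (Fin 3) (Fin 3) K) ∈ fixingIsometries (diagForm q m) (Pi.single 0 1)} =
      2 * (Fintype.card K + 1) := by
  have hdet (s : unitConic q ⊕ unitConic q) : (rotationOrReflection q s).det ≠ 0 := by
    rcases s with c | c <;>
      simp [rotationOrReflection, det_planeRotation c.2, det_planeReflection]
  rw [← Nat.card_eq_of_bijective (fun s => ⟨GeneralLinearGroup.mkOfDetNeZero _ (hdet s),
    rotationOrReflection_mem_fixingIsometries q m s⟩) ⟨fun s t h => ?_, fun A => ?_⟩]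
  · rw [Nat.card_sum, card_unitConic h2 hq]
    ring
  · exact rotationOrReflection_injective h2
      (by simpa using congrArg (fun A => ((A.1 : GL (Fin 3) K) : Matrix (Fin 3) (Fin 3) K)) h)
  · obtain ⟨s, hs⟩ := exists_rotationOrReflection_eq (ne_zero_of_not_isSquare_neg hq) hm h2 A.2
    exact ⟨s, Subtype.ext (Units.ext hs)⟩

lemma quadForm_smul (t : K) (v : Fin 3 → K) : quadForm K (t • v) = t ^ 2 * quadForm K v := by
  simp only [quadForm, Pi.smul_apply, smul_eq_mul]
  ring

lemma inv_smul_mem_fixingIsometries {x : Fin 3 → K} (hx : quadForm K x ≠ 0)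
    {A : Matrix (Fin 3) (Fin 3) K} {lam c : K} (hlam : lam ≠ 0) (hAx : A *ᵥ x = lam • x)
    (hAQ : ∀ y, quadForm K (A *ᵥ y) = c * quadForm K y) :
    lam⁻¹ • A ∈ fixingIsometries (quadForm K) x := by
  have hc : c = lam ^ 2 := by
    have := hAQ x
    rw [hAx, quadForm_smul] at this
    exact (mul_right_cancel₀ hx this).symm
  refine ⟨?_, fun y => ?_⟩
  · rw [smul_mulVec, hAx, smul_smul, inv_mul_cancel₀ hlam, one_smul]
  · rw [smul_mulVec, quadForm_smul, hAQ, hc]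
    field_simp

lemma eq_of_smul_eq_of_mem_fixingIsometries {x : Fin 3 → K} (hx : x ≠ 0) {φ : (Fin 3 → K) → K}
    {A B : Matrix (Fin 3) (Fin 3) K} {μ : K} (hA : A ∈ fixingIsometries φ x)
    (hB : B ∈ fixingIsometries φ x) (hBA : B = μ • A) : B = A := by
  have hμ : (μ - 1) • x = 0 := by
    rw [sub_smul, one_smul, ← hA.1, ← smul_mulVec, ← hBA, hB.1, hA.1, sub_self]
  rw [hBA, sub_eq_zero.mp ((smul_eq_zero.mp hμ).resolve_right hx), one_smul]

lemma card_quotient_scalarSubgroup_eq_card_fixingIsometries {x : Fin 3 → K}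
    (hx : quadForm K x ≠ 0) :
    Nat.card (similitudePointStabilizer K x ⧸
        (scalarSubgroup K).subgroupOf (similitudePointStabilizer K x)) =
      Nat.card {A : GL (Fin 3) K //
        (A : Matrix (Fin 3) (Fin 3) K) ∈ fixingIsometries (quadForm K) x} := by
  have hx0 : x ≠ 0 := by
    rintro rfl
    simp [quadForm] at hx
  symm
  refine Nat.card_eq_of_bijective (fun A => QuotientGroup.mk ⟨A.1, ⟨1, one_ne_zero, by
    rw [A.2.1, one_smul]⟩, ⟨1, one_ne_zero, fun y => by rw [A.2.2, one_mul]⟩⟩) ⟨?_, ?_⟩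
  · rintro ⟨A, hA⟩ ⟨B, hB⟩ hAB
    obtain ⟨μ, -, hμ⟩ := Subgroup.mem_subgroupOf.mp (QuotientGroup.eq.mp hAB)
    have hμ' : ((A⁻¹ * B : GL (Fin 3) K) : Matrix (Fin 3) (Fin 3) K) = μ • 1 := hμ
    have hBA : (B : Matrix (Fin 3) (Fin 3) K) = μ • (A : Matrix (Fin 3) (Fin 3) K) := by
      rw [← mul_inv_cancel_left A B, Units.val_mul, hμ', mul_smul_one]
    exact Subtype.ext (Units.ext (eq_of_smul_eq_of_mem_fixingIsometries hx0 hA hB hBA)).symm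
  · rintro ⟨⟨A, ⟨lam, hlam, hAx⟩, ⟨c, -, hAQ⟩⟩⟩
    set u := Units.mk0 lam hlam
    have hB : ((u⁻¹ • A : GL (Fin 3) K) : Matrix (Fin 3) (Fin 3) K) =
        lam⁻¹ • (A : Matrix (Fin 3) (Fin 3) K) := by
      rw [Units.val_smul]
      rfl
    refine ⟨⟨u⁻¹ • A, hB ▸ inv_smul_mem_fixingIsometries hx hlam hAx hAQ⟩,
      (QuotientGroup.eq.mpr (Subgroup.mem_subgroupOf.mpr ?_)).symm⟩
    refine ⟨lam⁻¹, inv_ne_zero hlam, ?_⟩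
    change ((A⁻¹ : GL (Fin 3) K) : Matrix (Fin 3) (Fin 3) K) *
      ((u⁻¹ • A : GL (Fin 3) K) : Matrix (Fin 3) (Fin 3) K) = _
    rw [hB, Matrix.mul_smul, Units.inv_mul]

end

/-- Let `x` be an internal point of the conic `C`, i.e. `−Q(x)` is a nonsquare in `K`.
The subgroup of the group of similitudes of `Q` modulo scalar matrices fixing the
projective point `[x]` has order `2·(s + 1)`, where `s` is the (odd) order of `K`. -/
theorem card_similitude_stabilizer_of_internal_point_mod_scalars
    (K : Type*) [Field K] [Fintype K] (hodd : Odd (Fintype.card K))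
    (x : Fin 3 → K) (hx : ¬ IsSquare (-(quadForm K x))) :
    Nat.card (similitudePointStabilizer K x ⧸
        (scalarSubgroup K).subgroupOf (similitudePointStabilizer K x)) =
      2 * (Fintype.card K + 1) := by
  have h2 := two_ne_zero_of_odd_card hodd
  have hq := ne_zero_of_not_isSquare_neg hx
  have hm := mul_ne_zero_of_not_isSquare_neg_quadForm hx
  have hdet : (adaptedBasis x).det ≠ 0 := by
    rw [det_adaptedBasis]
    exact neg_ne_zero.mpr (mul_ne_zero (mul_ne_zero h2 hm) hq)
  rw [card_quotient_scalarSubgroup_eq_card_fixingIsometries hq,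
    card_fixingIsometries_conj (GeneralLinearGroup.mkOfDetNeZero _ hdet)
      (adaptedBasis_mulVec_single x)]
  simp only [GeneralLinearGroup.val_mkOfDetNeZero, quadForm_adaptedBasis_mulVec]
  exact card_fixingIsometries_diagForm hx hm h2
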